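/- arXiv:1205.0879 — 4 statements merged into one kernel-verified Lean document; each statement's English description precedes it below -/
import Mathlib

section
/- Let L_1,...,L_k be nonzero operators in K[∂;δ] with orders r_1,...,r_k, and let n ≥ ord(lclm(L_1,...,L_k)). If (u_1,...,u_k,u) is a nonzero vector in the left kernel of M_n, where u_i ∈ K^{n+1−r_i} and u ∈ K^{n+1}, then u is nonzero and φ_n^{-1}(u) is a common left multiple of L_1,...,L_k with left cofactors φ_{n−r_i}^{-1}(u_i). -/
/-
Setting: a differential field `(K, δ)` (δ additive and Leibniz), and the ring
`A = K[∂;δ]` of linear differential operators, axiomatised as follows: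
a ring `A`, a ring embedding `ι : K →+* A`, an element `D = ∂` satisfying the
commutation rule `∂ a = a ∂ + δ(a)`, together with the fact that every element
of `A` is uniquely of the form `Σ ι(a_i) ∂^i` (the bijection `e`).
-/

noncomputable section

variable {K A : Type*}

/-- Order of a differential operator, read off from its coefficient expansion
(`e.symm x` is the finitely supported family of coefficients of `x` w.r.t. the powers `∂^i`). -/
def ordOf [Zero K] (e : (ℕ →₀ K) ≃ A) (x : A) : ℕ :=
  (e.symm x).support.sup id

/-- `φ_n` : the row vector `(a_n, a_{n-1}, ..., a_0)` of an operator of order `≤ n`. -/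
def phiV [Zero K] (e : (ℕ →₀ K) ≃ A) (n : ℕ) (x : A) : Fin (n + 1) → K :=
  fun j => e.symm x (n - (j : ℕ))

/-- Inverse of `φ_n` : the operator with coefficient vector `(a_n, ..., a_0)`. -/
def phiInv [AddCommMonoid K] (e : (ℕ →₀ K) ≃ A) (n : ℕ) (v : Fin (n + 1) → K) : A :=
  e (∑ j : Fin (n + 1), Finsupp.single (n - (j : ℕ)) (v j))

/-- The Sylvester-type matrix `S_n(P)` of an operator `P` of order `m`:
rows are `φ_n(∂^{n-m} P), ..., φ_n(P)`. -/
def Syl [Zero K] [Monoid A] (e : (ℕ →₀ K) ≃ A) (D : A) (n m : ℕ) (P : A) :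
    Matrix (Fin (n - m + 1)) (Fin (n + 1)) K :=
  Matrix.of fun i j => phiV e n (D ^ (n - m - (i : ℕ)) * P) j

/-- The block matrix `M_n` with diagonal blocks `S_n(L_i)` and a last block row
of negated identity matrices `S_n(-1)`. -/
def Mmat [Field K] [Ring A] (e : (ℕ →₀ K) ≃ A) (D : A) {k : ℕ}
    (L : Fin k → A) (r : Fin k → ℕ) (n : ℕ) :
    Matrix ((Σ i : Fin k, Fin (n - r i + 1)) ⊕ Fin (n + 1)) (Fin k × Fin (n + 1)) K :=
  Matrix.of fun row col =>
    match row with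
    | Sum.inl ⟨i, a⟩ => if i = col.1 then Syl e D n (r i) (L i) a col.2 else 0
    | Sum.inr a => if (a : ℕ) = (col.2 : ℕ) then -1 else 0

/-- `M` is a (nonzero) common left multiple of the family `L`. -/
def IsCLM [Ring A] {k : ℕ} (L : Fin k → A) (M : A) : Prop :=
  M ≠ 0 ∧ ∀ i, ∃ Q, M = Q * L i

/-- `M` is a least common left multiple of the family `L`: a common left multiple
of minimal order. -/
def IsLCLM [Field K] [Ring A] (e : (ℕ →₀ K) ≃ A) {k : ℕ} (L : Fin k → A) (M : A) : Prop :=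
  IsCLM L M ∧ ∀ M', IsCLM L M' → ordOf e M ≤ ordOf e M'

end

/-
Reading block column `i` of `(u₁, …, u_k, u) · M_n = 0` gives `u = uᵢ · S_n(Lᵢ)`, and `S_n(P)`
is built so that `φ_n⁻¹(v · S_n(P)) = φ_{n-m}⁻¹(v) · P` whenever `ord P ≤ m ≤ n`. This yields the
cofactor identities as soon as `rᵢ ≤ n`, which holds because the leading coefficient of `Q P` is
the product of those of `Q` and `P` (as `∂^d P` keeps the leading coefficient of `P`), so the order
of a nonzero product is at least that of its right factor. For the same reason `K[∂;δ]` has no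
zero divisors, so `u = 0` would force every `uᵢ` to vanish.
-/

namespace DiffOp

variable {K A : Type*}

section Coefficients

theorem ordOf_le_iff [Zero K] (e : (ℕ →₀ K) ≃ A) {x : A} {m : ℕ} :
    ordOf e x ≤ m ↔ ∀ j, m < j → e.symm x j = 0 := by
  simp only [ordOf, Finset.sup_le_iff, id, Finsupp.mem_support_iff]
  exact forall_congr' fun j => not_imp_comm.trans (by simp only [not_le])

theorem symm_phiInv_apply [AddCommMonoid K] (e : (ℕ →₀ K) ≃ A) (n : ℕ) (v : Fin (n + 1) → K)
    (m : ℕ) : e.symm (phiInv e n v) m = if h : m ≤ n then v ⟨n - m, by omega⟩ else 0 := by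
  rw [phiInv, e.symm_apply_apply, Finset.sum_apply']
  simp only [Finsupp.single_apply]
  split_ifs with h
  · rw [Finset.sum_eq_single_of_mem ⟨n - m, by omega⟩ (Finset.mem_univ _)]
    · rw [if_pos (by simp only; omega)]
    · intro j _ hj
      rw [if_neg fun hjm => hj (Fin.ext (by simp only; omega))]
  · exact Finset.sum_eq_zero fun j _ => if_neg (by omega)

theorem phiV_phiInv [AddCommMonoid K] (e : (ℕ →₀ K) ≃ A) (n : ℕ) (v : Fin (n + 1) → K) :
    phiV e n (phiInv e n v) = v := by
  funext j
  rw [phiV, symm_phiInv_apply, dif_pos (Nat.sub_le n j)]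
  congr
  omega

theorem phiInv_injective [AddCommMonoid K] (e : (ℕ →₀ K) ≃ A) (n : ℕ) :
    Function.Injective (phiInv e n) :=
  Function.LeftInverse.injective (phiV_phiInv e n)

theorem phiInv_phiV [AddCommMonoid K] (e : (ℕ →₀ K) ≃ A) {n : ℕ} {x : A} (hx : ordOf e x ≤ n) :
    phiInv e n (phiV e n x) = x := by
  refine e.symm.injective (Finsupp.ext fun m => ?_)
  rw [symm_phiInv_apply]
  split_ifs with h
  · rw [phiV, Fin.val_mk, Nat.sub_sub_self h]
  · exact ((ordOf_le_iff e).1 hx m (by omega)).symm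

end Coefficients

section Expansion

variable [Semiring K] [Semiring A] {ι : K →+* A} {D : A} {e : (ℕ →₀ K) ≃ A}
  (he : ∀ f : ℕ →₀ K, e f = f.sum fun i a => ι a * D ^ i)
include he

theorem apply_eq_liftAddHom :
    ⇑e = Finsupp.liftAddHom fun i => (AddMonoidHom.mulRight (D ^ i)).comp (ι : K →+ A) :=
  funext fun f => by rw [he, Finsupp.liftAddHom_apply]; rfl

theorem apply_zero : e 0 = 0 := by
  rw [apply_eq_liftAddHom he, map_zero]

theorem apply_add (f g : ℕ →₀ K) : e (f + g) = e f + e g := by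
  rw [apply_eq_liftAddHom he, map_add]

theorem apply_sum {α : Type*} (s : Finset α) (f : α → ℕ →₀ K) :
    e (∑ a ∈ s, f a) = ∑ a ∈ s, e (f a) := by
  rw [apply_eq_liftAddHom he, map_sum]

theorem apply_single (i : ℕ) (a : K) : e (Finsupp.single i a) = ι a * D ^ i := by
  rw [apply_eq_liftAddHom he, Finsupp.liftAddHom_apply_single]
  rfl

theorem apply_smul (a : K) (f : ℕ →₀ K) : e (a • f) = ι a * e f := by
  rw [he, he, Finsupp.sum_smul_index' fun i => by rw [map_zero, zero_mul], Finsupp.mul_sum]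
  simp only [smul_eq_mul, map_mul, mul_assoc]

theorem symm_zero : e.symm 0 = 0 :=
  e.symm_apply_eq.2 (apply_zero he).symm

theorem symm_apply_ordOf_ne_zero {x : A} (hx : x ≠ 0) : e.symm x (ordOf e x) ≠ 0 := by
  have hsupp : (e.symm x).support.Nonempty :=
    Finsupp.support_nonempty_iff.2 fun h => hx (by rw [← e.apply_symm_apply x, h, apply_zero he])
  obtain ⟨j, hj, hsup⟩ := Finset.exists_mem_eq_sup _ hsupp id
  rw [ordOf, hsup]
  exact Finsupp.mem_support_iff.1 hj

theorem phiInv_eq_sum (n : ℕ) (v : Fin (n + 1) → K) :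
    phiInv e n v = ∑ j, ι (v j) * D ^ (n - (j : ℕ)) := by
  rw [phiInv, apply_sum he]
  exact Finset.sum_congr rfl fun j _ => apply_single he _ _

theorem phiInv_zero (n : ℕ) : phiInv e n 0 = 0 := by
  simp only [phiInv_eq_sum he, Pi.zero_apply, map_zero, zero_mul, Finset.sum_const_zero]

theorem phiInv_eq_zero_iff {n : ℕ} {v : Fin (n + 1) → K} : phiInv e n v = 0 ↔ v = 0 :=
  (phiInv_injective e n).eq_iff' (phiInv_zero he n)

theorem phiInv_vecMul {α : Type*} [Fintype α] (n : ℕ) (v : α → K)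
    (M : Matrix α (Fin (n + 1)) K) :
    phiInv e n (Matrix.vecMul v M) = ∑ a, ι (v a) * phiInv e n (M a) := by
  simp only [phiInv_eq_sum he, Matrix.vecMul, dotProduct, map_sum, map_mul, Finset.sum_mul,
    Finset.mul_sum, mul_assoc]
  exact Finset.sum_comm

variable {δ : K →+ K} (hcomm : ∀ a : K, D * ι a = ι a * D + ι (δ a))
include hcomm

theorem symm_D_mul (x : A) :
    e.symm (D * x) = (e.symm x).mapDomain Nat.succ + (e.symm x).mapRange δ δ.map_zero := by
  obtain ⟨f, rfl⟩ := e.surjective x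
  rw [e.symm_apply_eq, e.symm_apply_apply, apply_add he, he, he, he, Finsupp.mul_sum,
    Finsupp.sum_mapDomain_index (fun _ => by rw [map_zero, zero_mul])
      (fun _ _ _ => by rw [map_add, add_mul]),
    Finsupp.sum_mapRange_index (fun _ => by rw [map_zero, zero_mul]), ← Finsupp.sum_add]
  refine Finsupp.sum_congr fun i _ => ?_
  rw [← mul_assoc, hcomm, add_mul, mul_assoc, ← pow_succ']

theorem symm_D_mul_apply_succ (x : A) (j : ℕ) :
    e.symm (D * x) (j + 1) = e.symm x j + δ (e.symm x (j + 1)) := by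
  rw [symm_D_mul he hcomm, Finsupp.add_apply, Finsupp.mapRange_apply,
    Finsupp.mapDomain_apply Nat.succ_injective]

theorem ordOf_D_mul_le {x : A} {m : ℕ} (hx : ordOf e x ≤ m) : ordOf e (D * x) ≤ m + 1 := by
  rw [ordOf_le_iff] at hx ⊢
  intro j hj
  obtain ⟨j, rfl⟩ := Nat.exists_eq_add_of_le' (by omega : 1 ≤ j)
  rw [symm_D_mul_apply_succ he hcomm, hx j (by omega), hx (j + 1) (by omega), map_zero, add_zero]

theorem symm_D_mul_apply_succ_of_ordOf_le {x : A} {m : ℕ} (hx : ordOf e x ≤ m) :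
    e.symm (D * x) (m + 1) = e.symm x m := by
  rw [symm_D_mul_apply_succ he hcomm, (ordOf_le_iff e).1 hx (m + 1) m.lt_succ_self, map_zero,
    add_zero]

theorem ordOf_D_pow_mul_le {x : A} {m : ℕ} (hx : ordOf e x ≤ m) (d : ℕ) :
    ordOf e (D ^ d * x) ≤ m + d := by
  induction d with
  | zero => rwa [pow_zero, one_mul]
  | succ d ih => rw [pow_succ', mul_assoc, ← add_assoc]; exact ordOf_D_mul_le he hcomm ih

theorem symm_D_pow_mul_apply_add {x : A} {m : ℕ} (hx : ordOf e x ≤ m) (d : ℕ) :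
    e.symm (D ^ d * x) (m + d) = e.symm x m := by
  induction d with
  | zero => rw [pow_zero, one_mul, add_zero]
  | succ d ih =>
    rw [pow_succ', mul_assoc, ← add_assoc,
      symm_D_mul_apply_succ_of_ordOf_le he hcomm (ordOf_D_pow_mul_le he hcomm hx d), ih]

theorem symm_mul_apply_ordOf_add (Q P : A) :
    e.symm (Q * P) (ordOf e Q + ordOf e P) = e.symm Q (ordOf e Q) * e.symm P (ordOf e P) := by
  have hQP : e.symm (Q * P) = ∑ i ∈ (e.symm Q).support, e.symm Q i • e.symm (D ^ i * P) := by
    rw [e.symm_apply_eq, apply_sum he]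
    conv_lhs => rw [← e.apply_symm_apply Q, he, Finsupp.sum, Finset.sum_mul]
    simp only [apply_smul he, e.apply_symm_apply, mul_assoc]
  rw [hQP, Finset.sum_apply', Finset.sum_eq_single (ordOf e Q)]
  · rw [Finsupp.smul_apply, smul_eq_mul, add_comm, symm_D_pow_mul_apply_add he hcomm le_rfl]
  · intro i hi hne
    have hlt : i < ordOf e Q := lt_of_le_of_ne (Finset.le_sup (f := id) hi) hne
    rw [Finsupp.smul_apply,
      (ordOf_le_iff e).1 (ordOf_D_pow_mul_le he hcomm le_rfl i) _ (by omega), smul_zero]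
  · intro h
    rw [Finsupp.smul_apply, Finsupp.notMem_support_iff.1 h, zero_smul]

theorem phiInv_vecMul_Syl {m n : ℕ} (hmn : m ≤ n) {P : A} (hP : ordOf e P ≤ m)
    (v : Fin (n - m + 1) → K) :
    phiInv e n (Matrix.vecMul v (Syl e D n m P)) = phiInv e (n - m) v * P := by
  have hrow : ∀ a : Fin (n - m + 1), phiInv e n (Syl e D n m P a) = D ^ (n - m - a) * P :=
    fun a => phiInv_phiV e ((ordOf_D_pow_mul_le he hcomm hP _).trans (by omega))
  rw [phiInv_vecMul he, phiInv_eq_sum he, Finset.sum_mul]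
  simp only [hrow, mul_assoc]

variable [NoZeroDivisors K]

theorem symm_mul_apply_ordOf_add_ne_zero {Q P : A} (hQ : Q ≠ 0) (hP : P ≠ 0) :
    e.symm (Q * P) (ordOf e Q + ordOf e P) ≠ 0 := by
  rw [symm_mul_apply_ordOf_add he hcomm]
  exact mul_ne_zero (symm_apply_ordOf_ne_zero he hQ) (symm_apply_ordOf_ne_zero he hP)

theorem noZeroDivisors : NoZeroDivisors A where
  eq_zero_or_eq_zero_of_mul_eq_zero {Q P} h := by
    by_contra! hQP
    apply symm_mul_apply_ordOf_add_ne_zero he hcomm hQP.1 hQP.2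
    rw [h, symm_zero he, Finsupp.coe_zero, Pi.zero_apply]

theorem ordOf_le_ordOf_mul {Q P : A} (hQ : Q ≠ 0) (hP : P ≠ 0) :
    ordOf e P ≤ ordOf e (Q * P) := by
  by_contra! hlt
  exact symm_mul_apply_ordOf_add_ne_zero he hcomm hQ hP ((ordOf_le_iff e).1 le_rfl _ (by omega))

end Expansion

section BlockMatrix

variable [Field K] [Ring A] (e : (ℕ →₀ K) ≃ A) (D : A) {k : ℕ} (L : Fin k → A) (r : Fin k → ℕ)
  {n : ℕ} (w : ((Σ i : Fin k, Fin (n - r i + 1)) ⊕ Fin (n + 1)) → K)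

theorem vecMul_Mmat_apply (i : Fin k) (c : Fin (n + 1)) :
    Matrix.vecMul w (Mmat e D L r n) (i, c) =
      Matrix.vecMul (fun a => w (Sum.inl ⟨i, a⟩)) (Syl e D n (r i) (L i)) c - w (Sum.inr c) := by
  simp only [Matrix.vecMul, dotProduct, Fintype.sum_sum_type, Mmat, Matrix.of_apply,
    Fintype.sum_sigma, mul_ite, mul_zero, Finset.sum_ite_irrel, Finset.sum_const_zero,
    Finset.sum_ite_eq', Finset.mem_univ, if_true, Fin.val_eq_val, mul_neg, mul_one]
  ring

theorem vecMul_Mmat_eq_zero_iff :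
    Matrix.vecMul w (Mmat e D L r n) = 0 ↔
      ∀ i, Matrix.vecMul (fun a => w (Sum.inl ⟨i, a⟩)) (Syl e D n (r i) (L i)) =
        fun c => w (Sum.inr c) := by
  simp only [funext_iff, Prod.forall, vecMul_Mmat_apply, Pi.zero_apply, sub_eq_zero]

end BlockMatrix

end DiffOp

open DiffOp

theorem left_kernel_vector_gives_clm_general [Field K] [Ring A]
    (δ : K →+ K)
    (ι : K →+* A) (D : A)
    (hcomm : ∀ a : K, D * ι a = ι a * D + ι (δ a))
    (e : (ℕ →₀ K) ≃ A)
    (he : ∀ f : ℕ →₀ K, e f = f.sum fun i a => ι a * D ^ i)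
    {k : ℕ} (L : Fin k → A) (hL : ∀ i, L i ≠ 0)
    (r : Fin k → ℕ) (hr : ∀ i, ordOf e (L i) = r i)
    (Lc : A) (hLc : IsLCLM e L Lc)
    (n : ℕ) (hn : ordOf e Lc ≤ n)
    (w : ((Σ i : Fin k, Fin (n - r i + 1)) ⊕ Fin (n + 1)) → K)
    (hw : w ≠ 0)
    (hker : Matrix.vecMul w (Mmat e D L r n) = 0) :
    (fun a : Fin (n + 1) => w (Sum.inr a)) ≠ 0 ∧
      ∀ i : Fin k,
        phiInv e n (fun a => w (Sum.inr a)) =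
          phiInv e (n - r i) (fun a => w (Sum.inl ⟨i, a⟩)) * L i := by
  have hr_le : ∀ i, r i ≤ n := fun i => by
    obtain ⟨⟨hLc0, hdvd⟩, -⟩ := hLc
    obtain ⟨Q, rfl⟩ := hdvd i
    have hQ : Q ≠ 0 := by rintro rfl; exact hLc0 (zero_mul _)
    exact hr i ▸ (ordOf_le_ordOf_mul he hcomm hQ (hL i)).trans hn
  have hcofactor : ∀ i, phiInv e n (fun a => w (Sum.inr a)) =
      phiInv e (n - r i) (fun a => w (Sum.inl ⟨i, a⟩)) * L i := fun i => by
    rw [← (vecMul_Mmat_eq_zero_iff e D L r w).1 hker i,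
      phiInv_vecMul_Syl he hcomm (hr_le i) (hr i).le]
  refine ⟨fun hu => hw ?_, hcofactor⟩
  have := noZeroDivisors he hcomm
  have hcoord : ∀ i, (fun a => w (Sum.inl ⟨i, a⟩)) = 0 := fun i => by
    have h := hcofactor i
    rw [hu, phiInv_zero he, eq_comm, mul_eq_zero, phiInv_eq_zero_iff he] at h
    exact h.resolve_right (hL i)
  ext (⟨i, a⟩ | a)
  · exact congrFun (hcoord i) a
  · exact congrFun hu a

/-- if `(u₁, ..., u_k, u)` is a nonzero vector in the left kernel of `M_n`,
then `u ≠ 0` and `φ_n⁻¹(u)` is a common left multiple of the `Lᵢ` with left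
cofactors `φ_{n-rᵢ}⁻¹(uᵢ)`. -/
theorem left_kernel_vector_gives_clm [Field K] [Ring A]
    (δ : K →+ K) (hLeib : ∀ a b : K, δ (a * b) = a * δ b + δ a * b)
    (ι : K →+* A) (D : A)
    (hcomm : ∀ a : K, D * ι a = ι a * D + ι (δ a))
    (e : (ℕ →₀ K) ≃ A)
    (he : ∀ f : ℕ →₀ K, e f = f.sum fun i a => ι a * D ^ i)
    {k : ℕ} (L : Fin k → A) (hL : ∀ i, L i ≠ 0)
    (r : Fin k → ℕ) (hr : ∀ i, ordOf e (L i) = r i)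
    (Lc : A) (hLc : IsLCLM e L Lc)
    (n : ℕ) (hn : ordOf e Lc ≤ n)
    (w : ((Σ i : Fin k, Fin (n - r i + 1)) ⊕ Fin (n + 1)) → K)
    (hw : w ≠ 0)
    (hker : Matrix.vecMul w (Mmat e D L r n) = 0) :
    (fun a : Fin (n + 1) => w (Sum.inr a)) ≠ 0 ∧
      ∀ i : Fin k,
        phiInv e n (fun a => w (Sum.inr a)) =
          phiInv e (n - r i) (fun a => w (Sum.inl ⟨i, a⟩)) * L i :=
  left_kernel_vector_gives_clm_general δ ι D hcomm e he L hL r hr Lc hLc n hn w hw hker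
end

section
/- Let L_1,...,L_k be nonzero operators in K[∂;δ] of orders r_1,...,r_k, let n ≥ ord(lclm(L_1,...,L_k)), and let ρ be the rank of the matrix M_n. Then ord(lclm(L_1,...,L_k)) = ρ + (r_1 + ... + r_k) − k(n+1). -/
noncomputable section
set_option linter.unusedSectionVars false
namespace OLC
variable {K A : Type*} [Field K] [Ring A]
variable (δ : K →+ K) (ι : K →+* A) (D : A) (e : (ℕ →₀ K) ≃ A)

/-! ### basic consequences of `he` -/
section basic
variable (he : ∀ f : ℕ →₀ K, e f = f.sum fun i a => ι a * D ^ i)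
include he

theorem e_single (i : ℕ) (a : K) : e (Finsupp.single i a) = ι a * D ^ i := by
  rw [he]; exact Finsupp.sum_single_index (by simp)

theorem e_add (f g : ℕ →₀ K) : e (f + g) = e f + e g := by
  rw [he, he, he]
  exact Finsupp.sum_add_index' (by simp) (by intro i b c; rw [map_add, add_mul])

/-- `e` as an additive equivalence. -/
def E : (ℕ →₀ K) ≃+ A := { e with map_add' := e_add ι D e he }

@[simp] theorem E_apply (f : ℕ →₀ K) : E ι D e he f = e f := rfl
@[simp] theorem E_symm_apply (x : A) : (E ι D e he).symm x = e.symm x := rfl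

theorem symm_add (x y : A) : e.symm (x + y) = e.symm x + e.symm y := by
  have := map_add (E ι D e he).symm x y; simpa using this

theorem symm_sub (x y : A) : e.symm (x - y) = e.symm x - e.symm y := by
  have := map_sub (E ι D e he).symm x y; simpa using this

theorem symm_zero : e.symm (0 : A) = 0 := map_zero (E ι D e he).symm

theorem symm_eq_zero {x : A} : e.symm x = 0 ↔ x = 0 := by
  constructor
  · intro h; have : x = e 0 := by rw [← h, Equiv.apply_symm_apply]
    rw [this, ← E_apply ι D e he 0, map_zero]
  · rintro rfl; exact symm_zero ι D e he

theorem smul_e (a : K) (f : ℕ →₀ K) : ι a * e f = e (a • f) := by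
  rw [he, he, Finsupp.sum_smul_index (by simp), Finsupp.sum, Finsupp.sum, Finset.mul_sum]
  exact Finset.sum_congr rfl fun i _ => by rw [← mul_assoc, ← map_mul]

theorem coeff_iota_mul (a : K) (x : A) (m : ℕ) :
    e.symm (ι a * x) m = a * e.symm x m := by
  have h : ι a * x = e (a • e.symm x) := by
    rw [← smul_e ι D e he, Equiv.apply_symm_apply]
  rw [h, Equiv.symm_apply_apply]; rfl

end basic

/-! ### order -/

theorem coeff_eq_zero {x : A} {m : ℕ} (h : ordOf e x < m) : e.symm x m = 0 := by
  by_contra hne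
  have hm : m ∈ (e.symm x).support := Finsupp.mem_support_iff.2 hne
  have := Finset.le_sup (f := id) hm
  simp only [id] at this
  unfold ordOf at h; omega

theorem ord_le_of {x : A} {m : ℕ} (h : ∀ p, m < p → e.symm x p = 0) : ordOf e x ≤ m := by
  refine Finset.sup_le fun i hi => ?_
  simp only [id]
  by_contra hc
  push_neg at hc
  exact (Finsupp.mem_support_iff.1 hi) (h i hc)

theorem le_ord_of {x : A} {m : ℕ} (h : e.symm x m ≠ 0) : m ≤ ordOf e x :=
  Finset.le_sup (f := id) (Finsupp.mem_support_iff.2 h)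

section basic2
variable (he : ∀ f : ℕ →₀ K, e f = f.sum fun i a => ι a * D ^ i)
include he

theorem lc_ne_zero {x : A} (hx : x ≠ 0) : e.symm x (ordOf e x) ≠ 0 := by
  have hne : (e.symm x).support.Nonempty := by
    rw [Finsupp.support_nonempty_iff]
    intro h0; exact hx ((symm_eq_zero ι D e he).1 h0)
  obtain ⟨b, hb, hb2⟩ := Finset.exists_mem_eq_sup _ hne (id : ℕ → ℕ)
  unfold ordOf; rw [hb2]; exact Finsupp.mem_support_iff.1 hb

end basic2
end OLC

set_option linter.unusedSectionVars false
noncomputable section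
namespace OLC
variable {K A : Type*} [Field K] [Ring A]
variable (δ : K →+ K) (ι : K →+* A) (D : A) (e : (ℕ →₀ K) ≃ A)

/-- The "multiply by D on the left" operation on coefficient families. -/
def T (f : ℕ →₀ K) : ℕ →₀ K :=
  f.sum fun i a => Finsupp.single (i + 1) a + Finsupp.single i (δ a)

section Dmul
variable (hcomm : ∀ a : K, D * ι a = ι a * D + ι (δ a))
variable (he : ∀ f : ℕ →₀ K, e f = f.sum fun i a => ι a * D ^ i)
include hcomm he

theorem D_mul_e (f : ℕ →₀ K) : D * e f = e (T δ f) := by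
  rw [he f, Finsupp.sum, Finset.mul_sum, T, Finsupp.sum, ← E_apply ι D e he, map_sum]
  refine Finset.sum_congr rfl fun i hi => ?_
  rw [E_apply, e_add ι D e he, e_single ι D e he, e_single ι D e he,
    ← mul_assoc, hcomm, add_mul, mul_assoc, ← pow_succ']

theorem symm_D_mul (x : A) : e.symm (D * x) = T δ (e.symm x) := by
  have : D * x = e (T δ (e.symm x)) := by
    rw [← D_mul_e δ ι D e hcomm he, Equiv.apply_symm_apply]
  rw [this, Equiv.symm_apply_apply]

end Dmul

theorem T_bound {f : ℕ →₀ K} {s : ℕ} (hf : ∀ p, s < p → f p = 0) :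
    (∀ p, s + 1 < p → T δ f p = 0) ∧ T δ f (s + 1) = f s := by
  have hsupp : ∀ i ∈ f.support, i ≤ s := by
    intro i hi
    by_contra hc
    exact Finsupp.mem_support_iff.1 hi (hf i (by omega))
  have happ : ∀ p, T δ f p = ∑ i ∈ f.support,
      ((if i + 1 = p then f i else 0) + (if i = p then δ (f i) else 0)) := by
    intro p
    rw [T, Finsupp.sum_apply, Finsupp.sum]
    refine Finset.sum_congr rfl fun i hi => ?_
    rw [Finsupp.add_apply, Finsupp.single_apply, Finsupp.single_apply]
  constructor
  · intro p hp
    rw [happ]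
    refine Finset.sum_eq_zero fun i hi => ?_
    have := hsupp i hi
    rw [if_neg (by omega), if_neg (by omega), add_zero]
  · rw [happ]
    by_cases hs : s ∈ f.support
    · rw [Finset.sum_eq_single_of_mem s hs]
      · rw [if_pos rfl, if_neg (by omega), add_zero]
      · intro i hi hne
        have := hsupp i hi
        have : i < s := lt_of_le_of_ne this hne
        rw [if_neg (by omega), if_neg (by omega), add_zero]
    · have h0 : f s = 0 := Finsupp.notMem_support_iff.1 hs
      rw [h0]
      refine Finset.sum_eq_zero fun i hi => ?_
      have h1 := hsupp i hi
      have h2 : i ≠ s := fun h => hs (h ▸ hi)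
      rw [if_neg (by omega), if_neg (by omega), add_zero]

section Dpow
variable (hcomm : ∀ a : K, D * ι a = ι a * D + ι (δ a))
variable (he : ∀ f : ℕ →₀ K, e f = f.sum fun i a => ι a * D ^ i)
include hcomm he

theorem Dpow_coeff {x : A} {s : ℕ} (hx : ∀ p, s < p → e.symm x p = 0) (j : ℕ) :
    (∀ p, s + j < p → e.symm (D ^ j * x) p = 0) ∧ e.symm (D ^ j * x) (s + j) = e.symm x s := by
  induction j with
  | zero => simpa using hx
  | succ j ih =>
    have hstep : D ^ (j + 1) * x = D * (D ^ j * x) := by rw [pow_succ', mul_assoc]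
    have hsymm := symm_D_mul δ ι D e hcomm he (D ^ j * x)
    have hb := T_bound δ (f := e.symm (D ^ j * x)) (s := s + j) ih.1
    constructor
    · intro p hp
      rw [hstep, hsymm]
      exact hb.1 p (by omega)
    · rw [hstep, hsymm, show s + (j + 1) = (s + j) + 1 by omega, hb.2, ih.2]

end Dpow
end OLC

noncomputable section
namespace OLC
variable {K A : Type*} [Field K] [Ring A]
variable (δ : K →+ K) (ι : K →+* A) (D : A) (e : (ℕ →₀ K) ≃ A)
variable (hcomm : ∀ a : K, D * ι a = ι a * D + ι (δ a))
variable (he : ∀ f : ℕ →₀ K, e f = f.sum fun i a => ι a * D ^ i)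
include hcomm he

theorem coeff_mul (x y : A) (m : ℕ) :
    e.symm (x * y) m = ∑ i ∈ (e.symm x).support, e.symm x i * e.symm (D ^ i * y) m := by
  have hx : x = (e.symm x).sum fun i a => ι a * D ^ i := by
    conv_lhs => rw [← Equiv.apply_symm_apply e x, he]
  have : x * y = ∑ i ∈ (e.symm x).support, ι (e.symm x i) * (D ^ i * y) := by
    conv_lhs => rw [hx]
    rw [Finsupp.sum, Finset.sum_mul]
    exact Finset.sum_congr rfl fun i _ => by rw [mul_assoc]
  rw [this, ← E_symm_apply ι D e he, map_sum, Finset.sum_apply']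
  exact Finset.sum_congr rfl fun i _ => by
    rw [E_symm_apply, coeff_iota_mul ι D e he]

theorem coeff_mul_bound (x y : A) {m : ℕ} (hm : ordOf e x + ordOf e y < m) :
    e.symm (x * y) m = 0 := by
  rw [coeff_mul δ ι D e hcomm he]
  refine Finset.sum_eq_zero fun i hi => ?_
  have h1 : i ≤ ordOf e x := Finset.le_sup (f := id) hi
  have h2 := (Dpow_coeff δ ι D e hcomm he (x := y) (s := ordOf e y)
    (fun p hp => coeff_eq_zero e hp) i).1 m (by omega)
  rw [h2, mul_zero]

theorem coeff_mul_top (x y : A) (hx : x ≠ 0) :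
    e.symm (x * y) (ordOf e x + ordOf e y) =
      e.symm x (ordOf e x) * e.symm y (ordOf e y) := by
  rw [coeff_mul δ ι D e hcomm he]
  have hmem : ordOf e x ∈ (e.symm x).support :=
    Finsupp.mem_support_iff.2 (lc_ne_zero ι D e he hx)
  rw [Finset.sum_eq_single_of_mem _ hmem]
  · have h2 := (Dpow_coeff δ ι D e hcomm he
      (fun p hp => coeff_eq_zero e (x := y) hp) (ordOf e x)).2
    rw [show ordOf e x + ordOf e y = ordOf e y + ordOf e x by omega, h2]
  · intro i hi hne
    have h1 : i ≤ ordOf e x := Finset.le_sup (f := id) hi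
    have h1' : i < ordOf e x := lt_of_le_of_ne h1 hne
    have h2 := (Dpow_coeff δ ι D e hcomm he
      (fun p hp => coeff_eq_zero e (x := y) hp) i).1 (ordOf e x + ordOf e y) (by omega)
    rw [h2, mul_zero]

theorem mul_ne_zero' {x y : A} (hx : x ≠ 0) (hy : y ≠ 0) : x * y ≠ 0 := by
  intro h0
  have := coeff_mul_top δ ι D e hcomm he x y hx
  rw [h0, symm_zero ι D e he] at this
  exact mul_ne_zero (lc_ne_zero ι D e he hx) (lc_ne_zero ι D e he hy) (by simpa using this.symm)

theorem ord_mul {x y : A} (hx : x ≠ 0) (hy : y ≠ 0) :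
    ordOf e (x * y) = ordOf e x + ordOf e y := by
  refine le_antisymm (ord_le_of e fun p hp => coeff_mul_bound δ ι D e hcomm he x y hp) ?_
  refine le_ord_of e ?_
  rw [coeff_mul_top δ ι D e hcomm he x y hx]
  exact mul_ne_zero (lc_ne_zero ι D e he hx) (lc_ne_zero ι D e he hy)

/-- Left Euclidean division. -/
theorem div_mod (y : A) (hy : y ≠ 0) :
    ∀ N x, ordOf e x ≤ N → ∃ q r : A, x = q * y + r ∧ (r = 0 ∨ ordOf e r < ordOf e y) := by
  have step : ∀ x : A, x ≠ 0 → ordOf e y ≤ ordOf e x →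
      ∃ t x' : A, x = t * y + x' ∧ ∀ p, ordOf e x ≤ p → e.symm x' p = 0 := by
    intro x hx hord
    set d := ordOf e x - ordOf e y with hd
    set c := e.symm x (ordOf e x) * (e.symm y (ordOf e y))⁻¹ with hc
    refine ⟨ι c * D ^ d, x - ι c * D ^ d * y, by abel, fun p hp => ?_⟩
    have hty : e.symm (ι c * D ^ d * y) p = c * e.symm (D ^ d * y) p := by
      rw [mul_assoc, coeff_iota_mul ι D e he]
    have hdp := Dpow_coeff δ ι D e hcomm he
      (fun q hq => coeff_eq_zero e (x := y) hq) d
    rw [symm_sub ι D e he, Finsupp.sub_apply, hty]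
    rcases eq_or_lt_of_le hp with hp' | hp'
    · have h2 : e.symm (D ^ d * y) (ordOf e x) = e.symm y (ordOf e y) := by
        rw [show ordOf e x = ordOf e y + d by omega]; exact hdp.2
      rw [← hp', h2, hc, mul_assoc, inv_mul_cancel₀ (lc_ne_zero ι D e he hy), mul_one, sub_self]
    · rw [coeff_eq_zero e hp', hdp.1 p (by omega), mul_zero, sub_zero]
  intro N
  induction N with
  | zero =>
    intro x hx0
    by_cases hx : x = 0
    · exact ⟨0, 0, by rw [hx, zero_mul, add_zero], Or.inl rfl⟩
    by_cases hord : ordOf e y ≤ ordOf e x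
    · obtain ⟨t, x', hxx, hx'⟩ := step x hx hord
      have : x' = 0 := by
        rw [← symm_eq_zero ι D e he]
        ext p
        simpa using hx' p (by omega)
      exact ⟨t, 0, by rw [hxx, this], Or.inl rfl⟩
    · exact ⟨0, x, by simp, Or.inr (by omega)⟩
  | succ N ih =>
    intro x hx0
    by_cases hx : x = 0
    · exact ⟨0, 0, by rw [hx, zero_mul, add_zero], Or.inl rfl⟩
    by_cases hord : ordOf e y ≤ ordOf e x
    · obtain ⟨t, x', hxx, hx'⟩ := step x hx hord
      have hx'ord : ordOf e x' ≤ N := by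
        by_cases h0 : x' = 0
        · rw [h0]; unfold ordOf; rw [symm_zero ι D e he]; simp
        · have h1 : ordOf e x' < ordOf e x := by
            by_contra hcon
            push_neg at hcon
            exact lc_ne_zero ι D e he h0 (hx' _ hcon)
          omega
      obtain ⟨q, r, hqr, hror⟩ := ih x' hx'ord
      exact ⟨t + q, r, by rw [hxx, hqr, add_mul, add_assoc], hror⟩
    · exact ⟨0, x, by simp, Or.inr (by omega)⟩

end OLC

noncomputable section
namespace OLC
variable {K A : Type*} [Field K] [Ring A]
variable (δ : K →+ K) (ι : K →+* A) (D : A) (e : (ℕ →₀ K) ≃ A)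

theorem finsupp_decomp {f : ℕ →₀ K} {m : ℕ} (hf : ∀ p, m < p → f p = 0) :
    f = ∑ j : Fin (m + 1), Finsupp.single (m - (j : ℕ)) (f (m - (j : ℕ))) := by
  ext p
  rw [Finset.sum_apply']
  by_cases hp : p ≤ m
  · rw [Finset.sum_eq_single_of_mem (⟨m - p, by omega⟩ : Fin (m + 1)) (Finset.mem_univ _)]
    · rw [Finsupp.single_apply, if_pos (by simp; omega)]
      congr 1
      simp; omega
    · intro j _ hne
      rw [Finsupp.single_apply, if_neg ?_]
      intro hc
      apply hne
      have := j.isLt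
      apply Fin.ext
      simp at hc ⊢
      omega
  · rw [hf p (by omega)]
    symm
    refine Finset.sum_eq_zero fun j _ => ?_
    rw [Finsupp.single_apply, if_neg (by omega)]

section withhe
variable (he : ∀ f : ℕ →₀ K, e f = f.sum fun i a => ι a * D ^ i)
include he

theorem op_decomp {x : A} {m : ℕ} (hx : ordOf e x ≤ m) :
    x = ∑ j : Fin (m + 1), ι (e.symm x (m - (j : ℕ))) * D ^ (m - (j : ℕ)) := by
  have hd := finsupp_decomp (f := e.symm x) (m := m)
    (fun p hp => coeff_eq_zero e (by omega))
  have : x = e (∑ j : Fin (m + 1),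
      Finsupp.single (m - (j : ℕ)) (e.symm x (m - (j : ℕ)))) := by
    rw [← hd, Equiv.apply_symm_apply]
  conv_lhs => rw [this]
  rw [← E_apply ι D e he, map_sum]
  exact Finset.sum_congr rfl fun j _ => by rw [E_apply, e_single ι D e he]

theorem phiInv_phiV {x : A} {m : ℕ} (hx : ordOf e x ≤ m) :
    phiInv e m (phiV e m x) = x := by
  unfold phiInv phiV
  conv_rhs => rw [← Equiv.apply_symm_apply e x]
  congr 1
  exact (finsupp_decomp (fun p hp => coeff_eq_zero e (by omega))).symm

theorem phiV_phiInv {m : ℕ} (v : Fin (m + 1) → K) :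
    phiV e m (phiInv e m v) = v := by
  funext a
  unfold phiInv phiV
  rw [Equiv.symm_apply_apply, Finset.sum_apply']
  rw [Finset.sum_eq_single_of_mem a (Finset.mem_univ _)]
  · rw [Finsupp.single_apply, if_pos rfl]
  · intro j _ hne
    rw [Finsupp.single_apply, if_neg ?_]
    intro hc
    apply hne
    have h1 := j.isLt
    have h2 := a.isLt
    apply Fin.ext
    omega

theorem ord_phiInv {m : ℕ} (v : Fin (m + 1) → K) : ordOf e (phiInv e m v) ≤ m := by
  refine ord_le_of e fun p hp => ?_
  unfold phiInv
  rw [Equiv.symm_apply_apply, Finset.sum_apply']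
  refine Finset.sum_eq_zero fun j _ => ?_
  rw [Finsupp.single_apply, if_neg (by omega)]

theorem phiInv_add {m : ℕ} (v w : Fin (m + 1) → K) :
    phiInv e m (v + w) = phiInv e m v + phiInv e m w := by
  unfold phiInv
  rw [← e_add ι D e he]
  congr 1
  rw [← Finset.sum_add_distrib]
  exact Finset.sum_congr rfl fun j _ => by
    rw [← Finsupp.single_add]; rfl

theorem phiInv_smul {m : ℕ} (c : K) (v : Fin (m + 1) → K) :
    phiInv e m (c • v) = ι c * phiInv e m v := by
  unfold phiInv
  rw [smul_e ι D e he, Finset.smul_sum]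
  congr 1
  exact Finset.sum_congr rfl fun j _ => by
    rw [Finsupp.smul_single]; rfl

end withhe

section mulrep
variable (hcomm : ∀ a : K, D * ι a = ι a * D + ι (δ a))
variable (he : ∀ f : ℕ →₀ K, e f = f.sum fun i a => ι a * D ^ i)
include hcomm he

theorem repr_mul {x : A} {m : ℕ} (hx : ordOf e x ≤ m) (y : A) (p : ℕ) :
    e.symm (x * y) p =
      ∑ a : Fin (m + 1), e.symm x (m - (a : ℕ)) * e.symm (D ^ (m - (a : ℕ)) * y) p := by
  conv_lhs => rw [op_decomp ι D e he hx]
  rw [Finset.sum_mul, ← E_symm_apply ι D e he, map_sum, Finset.sum_apply']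
  exact Finset.sum_congr rfl fun a _ => by
    rw [E_symm_apply, mul_assoc, coeff_iota_mul ι D e he]

/-- key divisibility: every common left multiple (possibly 0) of the `L i`
is a left multiple of the lclm. -/
theorem lclm_dvd {k : ℕ} {L : Fin k → A} {Lc : A} (hLc : IsLCLM e L Lc)
    {z : A} (hz : ∀ i, ∃ P, z = P * L i) :
    ∃ Q, z = Q * Lc ∧ (Q = 0 ∨ ordOf e Q + ordOf e Lc = ordOf e z) := by
  obtain ⟨⟨hLc0, hdvd⟩, hmin⟩ := hLc
  obtain ⟨q, r, hqr, hror⟩ := div_mod δ ι D e hcomm he Lc hLc0 (ordOf e z) z le_rfl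
  have hr0 : r = 0 := by
    rcases hror with h | h
    · exact h
    by_contra hr
    have hclm : IsCLM L r := by
      refine ⟨hr, fun i => ?_⟩
      obtain ⟨P, hP⟩ := hz i
      obtain ⟨Qi, hQi⟩ := hdvd i
      refine ⟨P - q * Qi, ?_⟩
      have : r = z - q * Lc := by rw [hqr]; abel
      rw [this, hP, hQi, sub_mul, mul_assoc]
    have := hmin r hclm
    omega
  rw [hr0, add_zero] at hqr
  by_cases hq : q = 0
  · exact ⟨q, hqr, Or.inl hq⟩
  · exact ⟨q, hqr, Or.inr (by rw [hqr, ord_mul δ ι D e hcomm he hq hLc0])⟩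

end mulrep
end OLC

noncomputable section
namespace OLC
open Matrix
variable {K A : Type*} [Field K] [Ring A]
variable (δ : K →+ K) (ι : K →+* A) (D : A) (e : (ℕ →₀ K) ≃ A)

section main
variable (hcomm : ∀ a : K, D * ι a = ι a * D + ι (δ a))
variable (he : ∀ f : ℕ →₀ K, e f = f.sum fun i a => ι a * D ^ i)
include hcomm he

theorem ord_zero : ordOf e (0 : A) = 0 := by
  unfold ordOf; rw [symm_zero ι D e he]; simp

/-- membership in the kernel of `Mmatᵀ`, unfolded. -/
theorem mem_ker_iff {k : ℕ} (L : Fin k → A) (r : Fin k → ℕ) (n : ℕ)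
    (v : ((Σ i : Fin k, Fin (n - r i + 1)) ⊕ Fin (n + 1)) → K) :
    (Mmat e D L r n)ᵀ.mulVecLin v = 0 ↔
      ∀ (i : Fin k) (j : Fin (n + 1)),
        (∑ a : Fin (n - r i + 1), v (Sum.inl ⟨i, a⟩) * Syl e D n (r i) (L i) a j)
          = v (Sum.inr j) := by
  have hmv : ∀ (i : Fin k) (j : Fin (n + 1)),
      (Mmat e D L r n)ᵀ.mulVecLin v (i, j) =
        (∑ a : Fin (n - r i + 1), v (Sum.inl ⟨i, a⟩) * Syl e D n (r i) (L i) a j)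
          - v (Sum.inr j) := by
    intro i j
    rw [Matrix.mulVecLin_apply, Matrix.mulVec, dotProduct]
    simp only [Matrix.transpose_apply]
    rw [Fintype.sum_sum_type]
    have h1 : (∑ x : Σ i' : Fin k, Fin (n - r i' + 1),
        Mmat e D L r n (Sum.inl x) (i, j) * v (Sum.inl x))
        = ∑ a : Fin (n - r i + 1), v (Sum.inl ⟨i, a⟩) * Syl e D n (r i) (L i) a j := by
      rw [← Finset.univ_sigma_univ, Finset.sum_sigma]
      have h2 : ∀ i' : Fin k, (∑ a : Fin (n - r i' + 1),
          Mmat e D L r n (Sum.inl ⟨i', a⟩) (i, j) * v (Sum.inl ⟨i', a⟩))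
          = if i' = i then
              (∑ a : Fin (n - r i + 1), v (Sum.inl ⟨i, a⟩) * Syl e D n (r i) (L i) a j)
            else 0 := by
        intro i'
        by_cases h : i' = i
        · subst h
          rw [if_pos rfl]
          refine Finset.sum_congr rfl fun a _ => ?_
          show (if i' = i' then Syl e D n (r i') (L i') a j else 0) * v (Sum.inl ⟨i', a⟩) = _
          rw [if_pos rfl, mul_comm]
        · rw [if_neg h]
          refine Finset.sum_eq_zero fun a _ => ?_
          show (if i' = i then Syl e D n (r i') (L i') a j else 0) * v (Sum.inl ⟨i', a⟩) = 0
          rw [if_neg h, zero_mul]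
      rw [Finset.sum_congr rfl fun i' _ => h2 i']
      exact Fintype.sum_ite_eq' i _
    have h3 : (∑ b : Fin (n + 1), Mmat e D L r n (Sum.inr b) (i, j) * v (Sum.inr b))
        = - v (Sum.inr j) := by
      have h4 : ∀ b : Fin (n + 1),
          Mmat e D L r n (Sum.inr b) (i, j) * v (Sum.inr b)
          = if b = j then - v (Sum.inr b) else 0 := by
        intro b
        show (if (b : ℕ) = (j : ℕ) then (-1 : K) else 0) * v (Sum.inr b) = _
        by_cases h : b = j
        · rw [if_pos (by rw [h]), if_pos h, neg_one_mul]
        · rw [if_neg (fun hc => h (Fin.ext hc)), if_neg h, zero_mul]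
      rw [Finset.sum_congr rfl fun b _ => h4 b, Fintype.sum_ite_eq' j _]
    rw [h1, h3]
    abel
  constructor
  · intro h0 i j
    have h6 := congrFun h0 (i, j)
    rw [hmv i j] at h6
    rw [Pi.zero_apply] at h6
    exact sub_eq_zero.mp h6
  · intro h0
    funext c
    obtain ⟨i, j⟩ := c
    show (Mmat e D L r n)ᵀ.mulVecLin v (i, j) = 0
    rw [hmv i j, h0 i j, sub_self]

end main
end OLC

noncomputable section
namespace OLC
open Matrix
variable {K A : Type*} [Field K] [Ring A]
variable (δ : K →+ K) (ι : K →+* A) (D : A) (e : (ℕ →₀ K) ≃ A)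

section main
variable (hcomm : ∀ a : K, D * ι a = ι a * D + ι (δ a))
variable (he : ∀ f : ℕ →₀ K, e f = f.sum fun i a => ι a * D ^ i)
include hcomm he

/-- The Sylvester matrix represents right multiplication. -/
theorem syl_bridge {k : ℕ} (L : Fin k → A) (r : Fin k → ℕ) (n : ℕ)
    (i : Fin k) (va : Fin (n - r i + 1) → K) (j : Fin (n + 1)) :
    (∑ a : Fin (n - r i + 1), va a * Syl e D n (r i) (L i) a j)
      = e.symm (phiInv e (n - r i) va * L i) (n - (j : ℕ)) := by
  rw [repr_mul δ ι D e hcomm he (ord_phiInv ι D e he va) (L i) (n - (j : ℕ))]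
  refine Finset.sum_congr rfl fun a _ => ?_
  have h1 : e.symm (phiInv e (n - r i) va) (n - r i - (a : ℕ)) = va a :=
    congrFun (phiV_phiInv ι D e he va) a
  rw [h1]
  rfl

end main
end OLC

noncomputable section
namespace OLC
open Matrix
variable {K A : Type*} [Field K] [Ring A]
variable (δ : K →+ K) (ι : K →+* A) (D : A) (e : (ℕ →₀ K) ≃ A)

section main
variable (hcomm : ∀ a : K, D * ι a = ι a * D + ι (δ a))
variable (he : ∀ f : ℕ →₀ K, e f = f.sum fun i a => ι a * D ^ i)
include hcomm he

theorem finrank_ker {k : ℕ} (L : Fin k → A) (hL : ∀ i, L i ≠ 0)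
    (r : Fin k → ℕ) (hr : ∀ i, ordOf e (L i) = r i)
    (Lc : A) (hLc : IsLCLM e L Lc) (n : ℕ) (hn : ordOf e Lc ≤ n) :
    Module.finrank K (LinearMap.ker ((Mmat e D L r n)ᵀ.mulVecLin))
      = n - ordOf e Lc + 1 := by
  have hLc0 : Lc ≠ 0 := hLc.1.1
  choose Qi hQi using hLc.1.2
  have hmin := hLc.2
  set s := ordOf e Lc with hs
  set d := n - s with hd
  have hQiNe : ∀ i, Qi i ≠ 0 := fun i h => hLc0 (by rw [hQi i, h, zero_mul])
  have hordQi : ∀ i, ordOf e (Qi i) + r i = s := by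
    intro i
    rw [← hr i, ← ord_mul δ ι D e hcomm he (hQiNe i) (hL i), ← hQi i]
  have hrle : ∀ i, r i ≤ s := fun i => by have := hordQi i; omega
  -- the linear map J0
  let J0 : (Fin (d + 1) → K) →ₗ[K]
      (((Σ i : Fin k, Fin (n - r i + 1)) ⊕ Fin (n + 1)) → K) :=
    { toFun := fun c => Sum.elim
        (fun x : Σ i : Fin k, Fin (n - r i + 1) =>
          e.symm (phiInv e d c * Qi x.1) (n - r x.1 - (x.2 : ℕ)))
        (fun b : Fin (n + 1) => e.symm (phiInv e d c * Lc) (n - (b : ℕ)))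
      map_add' := by
        intro c1 c2
        funext row
        rcases row with x | b
        · simp only [Sum.elim_inl, Pi.add_apply]
          rw [phiInv_add ι D e he, add_mul, symm_add ι D e he, Finsupp.add_apply]
        · simp only [Sum.elim_inr, Pi.add_apply]
          rw [phiInv_add ι D e he, add_mul, symm_add ι D e he, Finsupp.add_apply]
      map_smul' := by
        intro a c
        funext row
        rcases row with x | b
        · simp only [Sum.elim_inl, Pi.smul_apply, smul_eq_mul, RingHom.id_apply]
          rw [phiInv_smul ι D e he, mul_assoc, coeff_iota_mul ι D e he]
        · simp only [Sum.elim_inr, Pi.smul_apply, smul_eq_mul, RingHom.id_apply]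
          rw [phiInv_smul ι D e he, mul_assoc, coeff_iota_mul ι D e he] }
  have hordPc : ∀ c, ordOf e (phiInv e d c) ≤ d := fun c => ord_phiInv ι D e he c
  -- J0 lands in the kernel
  have hmem : ∀ c, J0 c ∈ LinearMap.ker ((Mmat e D L r n)ᵀ.mulVecLin) := by
    intro c
    rw [LinearMap.mem_ker, mem_ker_iff δ ι D e hcomm he]
    intro i j
    have hord1 : ordOf e (phiInv e d c * Qi i) ≤ n - r i := by
      by_cases h0 : phiInv e d c = 0
      · rw [h0, zero_mul, ord_zero δ ι D e hcomm he]
        exact Nat.zero_le _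
      · rw [ord_mul δ ι D e hcomm he h0 (hQiNe i)]
        have h2 := hordPc c
        have h3 := hordQi i
        have h4 := hrle i
        omega
    have hb := syl_bridge δ ι D e hcomm he L r n i
      (phiV e (n - r i) (phiInv e d c * Qi i)) j
    rw [phiInv_phiV ι D e he hord1] at hb
    have hgoal : (∑ a : Fin (n - r i + 1),
        e.symm (phiInv e d c * Qi i) (n - r i - (a : ℕ)) * Syl e D n (r i) (L i) a j)
        = e.symm (phiInv e d c * Lc) (n - (j : ℕ)) := by
      have : (phiInv e d c * Qi i) * L i = phiInv e d c * Lc := by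
        rw [mul_assoc, ← hQi i]
      rw [← this]
      exact hb
    exact hgoal
  -- injectivity
  have hinj0 : ∀ c, J0 c = 0 → c = 0 := by
    intro c h0
    by_contra hc0
    have hPc : phiInv e d c ≠ 0 := by
      intro h
      apply hc0
      have h1 := phiV_phiInv ι D e he (m := d) c
      rw [← h1]
      funext a
      show e.symm (phiInv e d c) (d - (a : ℕ)) = 0
      rw [h, symm_zero ι D e he]
      rfl
    have hne : phiInv e d c * Lc ≠ 0 := mul_ne_zero' δ ι D e hcomm he hPc hLc0
    have hordm : ordOf e (phiInv e d c * Lc) ≤ n := by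
      rw [ord_mul δ ι D e hcomm he hPc hLc0]
      have := hordPc c
      omega
    have hlc := lc_ne_zero ι D e he hne
    have hj : n - ordOf e (phiInv e d c * Lc) < n + 1 := by omega
    have h2 := congrFun h0 (Sum.inr ⟨n - ordOf e (phiInv e d c * Lc), hj⟩)
    simp only [Pi.zero_apply] at h2
    have h3 : n - (n - ordOf e (phiInv e d c * Lc)) = ordOf e (phiInv e d c * Lc) := by
      omega
    rw [show (J0 c) (Sum.inr ⟨n - ordOf e (phiInv e d c * Lc), hj⟩)
      = e.symm (phiInv e d c * Lc) (n - (n - ordOf e (phiInv e d c * Lc))) from rfl, h3] at h2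
    exact hlc h2
  -- surjectivity onto the kernel
  have hsurj : ∀ v ∈ LinearMap.ker ((Mmat e D L r n)ᵀ.mulVecLin), ∃ c, J0 c = v := by
    intro v hv
    rw [LinearMap.mem_ker, mem_ker_iff δ ι D e hcomm he] at hv
    set w : Fin (n + 1) → K := fun b => v (Sum.inr b) with hw
    set Mv := phiInv e n w with hMvdef
    set Pi' : Fin k → A := fun i => phiInv e (n - r i) (fun a => v (Sum.inl ⟨i, a⟩)) with hPi'
    have hMv : ∀ i, Mv = Pi' i * L i := by
      intro i
      have h1 : ordOf e (Pi' i * L i) ≤ n := by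
        by_cases h0 : Pi' i = 0
        · rw [h0, zero_mul, ord_zero δ ι D e hcomm he]
          exact Nat.zero_le _
        · rw [ord_mul δ ι D e hcomm he h0 (hL i), hr i]
          have h5 : ordOf e (Pi' i) ≤ n - r i := ord_phiInv ι D e he _
          have h6 := hrle i
          omega
      have h2 : ordOf e Mv ≤ n := ord_phiInv ι D e he w
      have h3 : phiV e n Mv = phiV e n (Pi' i * L i) := by
        funext j
        have h4 := hv i j
        have h5 := syl_bridge δ ι D e hcomm he L r n i (fun a => v (Sum.inl ⟨i, a⟩)) j
        have h6 : phiV e n Mv j = w j := congrFun (phiV_phiInv ι D e he w) j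
        rw [h6]
        show w j = e.symm (Pi' i * L i) (n - (j : ℕ))
        rw [← h5]
        exact h4.symm
      calc Mv = phiInv e n (phiV e n Mv) := (phiInv_phiV ι D e he h2).symm
        _ = phiInv e n (phiV e n (Pi' i * L i)) := by rw [h3]
        _ = Pi' i * L i := phiInv_phiV ι D e he h1
    obtain ⟨Q, hQ, hQord⟩ := lclm_dvd δ ι D e hcomm he hLc (fun i => ⟨Pi' i, hMv i⟩)
    have hQd : ordOf e Q ≤ d := by
      rcases hQord with h | h
      · rw [h, ord_zero δ ι D e hcomm he]
        exact Nat.zero_le _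
      · have h2 : ordOf e Mv ≤ n := ord_phiInv ι D e he w
        omega
    refine ⟨phiV e d Q, ?_⟩
    have hPcQ : phiInv e d (phiV e d Q) = Q := phiInv_phiV ι D e he hQd
    funext row
    rcases row with x | b
    · obtain ⟨i, a⟩ := x
      show e.symm (phiInv e d (phiV e d Q) * Qi i) (n - r i - (a : ℕ)) = v (Sum.inl ⟨i, a⟩)
      rw [hPcQ]
      have hQQi : Q * Qi i = Pi' i := by
        have h7 : (Q * Qi i) * L i = Pi' i * L i := by
          rw [mul_assoc, ← hQi i, ← hQ, hMv i]
        have h8 : (Q * Qi i - Pi' i) * L i = 0 := by rw [sub_mul, h7, sub_self]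
        by_contra hne
        exact mul_ne_zero' δ ι D e hcomm he (sub_ne_zero.mpr hne) (hL i) h8
      rw [hQQi]
      exact congrFun (phiV_phiInv ι D e he (fun a' => v (Sum.inl ⟨i, a'⟩))) a
    · show e.symm (phiInv e d (phiV e d Q) * Lc) (n - (b : ℕ)) = v (Sum.inr b)
      rw [hPcQ, ← hQ]
      exact congrFun (phiV_phiInv ι D e he w) b
  -- assemble
  let Jr := J0.codRestrict (LinearMap.ker ((Mmat e D L r n)ᵀ.mulVecLin)) hmem
  have hbij : Function.Bijective Jr := by
    constructor
    · intro c1 c2 h12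
      have h13 : J0 c1 = J0 c2 := congrArg Subtype.val h12
      have h14 : J0 (c1 - c2) = 0 := by rw [map_sub, h13, sub_self]
      exact sub_eq_zero.mp (hinj0 _ h14)
    · rintro ⟨v, hv⟩
      obtain ⟨c, hc⟩ := hsurj v hv
      exact ⟨c, Subtype.ext hc⟩
  have hfr := LinearEquiv.finrank_eq (LinearEquiv.ofBijective Jr hbij)
  rw [← hfr, Module.finrank_pi, Fintype.card_fin]

end main
end OLC

open Matrix in
/-- `ord(lclm(L₁,...,L_k)) = rank(M_n) + Σᵢ rᵢ − k(n+1)`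
(stated additively to avoid natural subtraction). -/
theorem ord_lclm_eq_rank [Field K] [Ring A]
    (δ : K →+ K) (hLeib : ∀ a b : K, δ (a * b) = a * δ b + δ a * b)
    (ι : K →+* A) (D : A)
    (hcomm : ∀ a : K, D * ι a = ι a * D + ι (δ a))
    (e : (ℕ →₀ K) ≃ A)
    (he : ∀ f : ℕ →₀ K, e f = f.sum fun i a => ι a * D ^ i)
    {k : ℕ} (L : Fin k → A) (hL : ∀ i, L i ≠ 0)
    (r : Fin k → ℕ) (hr : ∀ i, ordOf e (L i) = r i)
    (Lc : A) (hLc : IsLCLM e L Lc)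
    (n : ℕ) (hn : ordOf e Lc ≤ n) :
    ordOf e Lc + k * (n + 1) = (Mmat e D L r n).rank + ∑ i, r i := by
  classical
  have hrle : ∀ i, r i ≤ ordOf e Lc := by
    intro i
    obtain ⟨Qi, hQi⟩ := hLc.1.2 i
    have hQiNe : Qi ≠ 0 := fun h => hLc.1.1 (by rw [hQi, h, zero_mul])
    have h1 : ordOf e (Qi * L i) = ordOf e Qi + ordOf e (L i) :=
      OLC.ord_mul δ ι D e hcomm he hQiNe (hL i)
    rw [← hQi, hr i] at h1
    omega
  have hrn := LinearMap.finrank_range_add_finrank_ker ((Mmat e D L r n)ᵀ.mulVecLin)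
  have hker := OLC.finrank_ker δ ι D e hcomm he L hL r hr Lc hLc n hn
  have htrans : ((Mmat e D L r n)ᵀ).rank = (Mmat e D L r n).rank :=
    Matrix.rank_transpose _
  have hrange : ((Mmat e D L r n)ᵀ).rank
      = Module.finrank K (LinearMap.range ((Mmat e D L r n)ᵀ.mulVecLin)) := rfl
  have hcard : Module.finrank K
      (((Σ i : Fin k, Fin (n - r i + 1)) ⊕ Fin (n + 1)) → K)
      = (∑ i, (n - r i + 1)) + (n + 1) := by
    rw [Module.finrank_pi, Fintype.card_sum, Fintype.card_sigma, Fintype.card_fin]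
    simp [Fintype.card_fin]
  have key : (Mmat e D L r n).rank + (n - ordOf e Lc + 1)
      = (∑ i, (n - r i + 1)) + (n + 1) := by
    rw [← htrans, hrange, ← hker, ← hcard]
    exact hrn
  have hsum : (∑ i, (n - r i + 1)) + (∑ i, r i) = k * (n + 1) := by
    rw [← Finset.sum_add_distrib]
    have h2 : ∀ i ∈ Finset.univ, (n - r i + 1) + r i = n + 1 := fun i _ => by
      have := hrle i; omega
    rw [Finset.sum_congr rfl h2, Finset.sum_const, Finset.card_univ, Fintype.card_fin,
      smul_eq_mul]
  have hsn : ordOf e Lc ≤ n := hn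
  set a := (Mmat e D L r n).rank with ha
  set S1 := ∑ i, (n - r i + 1) with hS1
  set S2 := ∑ i, r i with hS2
  set s := ordOf e Lc with hss
  set Kn := k * (n + 1) with hKn
  omega
end
end
end
end
end
end
end
end

section
/- Let L_1,...,L_k be nonzero operators in K[∂;δ] with L = lclm(L_1,...,L_k) of order ℓ, and let n ≥ ℓ. Then the left kernel of the matrix M_n has dimension exactly n − ℓ + 1 over K, with basis given by the vectors v_j = (φ_{n−r_1}(∂^j Q_1), ..., φ_{n−r_k}(∂^j Q_k), φ_n(∂^j L)) for 0 ≤ j ≤ n − ℓ, where L = Q_i L_i. -/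
/-!
A kernel vector `(φ(P_1), …, φ(P_k), φ(W))` of `M_n` is the same as a tuple of operators with
`P_i L_i = W`, `ord P_i ≤ n - r_i` and `ord W ≤ n`. Euclidean division of `W` by `L` leaves a
remainder that is a common left multiple of order `< ℓ`, hence zero, so `W = R L`; cancelling
`L_i` in the domain `K[∂;δ]` gives `P_i = R Q_i`, and `ord R ≤ n - ℓ`. Writing `R = Σ c_j ∂^j`
exhibits the kernel vector as `Σ c_j v_j`. Conversely `Σ c_j v_j = 0` says that
`(Σ c_j ∂^j) L = 0`, so all `c_j` vanish.
-/

section Coordinates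

variable {K A : Type*}

theorem ordOf_le_iff [Zero K] {e : (ℕ →₀ K) ≃ A} {x : A} {m : ℕ} :
    ordOf e x ≤ m ↔ ∀ t, m < t → e.symm x t = 0 := by
  simp only [ordOf, Finset.sup_le_iff, id_eq, Finsupp.mem_support_iff]
  exact forall_congr' fun t => not_imp_comm.trans (by simp only [not_le])

theorem le_ordOf_of_symm_apply_ne_zero [Zero K] {e : (ℕ →₀ K) ≃ A} {x : A} {t : ℕ}
    (h : e.symm x t ≠ 0) : t ≤ ordOf e x :=
  not_lt.mp fun ht => h (ordOf_le_iff.mp le_rfl t ht)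

variable [Semiring K] [Semiring A] {ι : K →+* A} {D : A} {e : (ℕ →₀ K) ≃ A}
  (he : ∀ f : ℕ →₀ K, e f = f.sum fun i a => ι a * D ^ i)
include he

theorem apply_single (i : ℕ) (a : K) : e (Finsupp.single i a) = ι a * D ^ i := by
  rw [he, Finsupp.sum_single_index (by simp)]

theorem apply_zero : e 0 = 0 := by
  rw [he, Finsupp.sum_zero_index]

theorem symm_zero : e.symm 0 = 0 := by
  rw [Equiv.symm_apply_eq, apply_zero he]

theorem apply_add (f g : ℕ →₀ K) : e (f + g) = e f + e g := by
  rw [he, he, he, Finsupp.sum_add_index' (by simp) fun _ _ _ => by rw [map_add, add_mul]]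

theorem apply_sum {σ : Type*} (s : Finset σ) (f : σ → ℕ →₀ K) :
    e (∑ j ∈ s, f j) = ∑ j ∈ s, e (f j) :=
  map_sum ({ toFun := e, map_zero' := apply_zero he, map_add' := apply_add he } :
    (ℕ →₀ K) →+ A) f s

theorem symm_add (x y : A) : e.symm (x + y) = e.symm x + e.symm y := by
  rw [Equiv.symm_apply_eq, apply_add he, e.apply_symm_apply, e.apply_symm_apply]

theorem symm_sum {σ : Type*} (s : Finset σ) (f : σ → A) :
    e.symm (∑ j ∈ s, f j) = ∑ j ∈ s, e.symm (f j) :=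
  map_sum ({ toFun := e.symm, map_zero' := symm_zero he, map_add' := symm_add he } :
    A →+ (ℕ →₀ K)) f s

theorem symm_iota_mul_apply (c : K) (x : A) (t : ℕ) :
    e.symm (ι c * x) t = c * e.symm x t := by
  suffices ι c * x = e ((e.symm x).mapRange (c * ·) (mul_zero c)) by
    rw [this, e.symm_apply_apply, Finsupp.mapRange_apply]
  conv_lhs => rw [← e.apply_symm_apply x]
  rw [he, he, Finsupp.sum_mapRange_index (by simp), Finsupp.mul_sum]
  exact Finsupp.sum_congr fun i _ => by rw [← mul_assoc, ← map_mul]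

theorem symm_apply_ordOf_ne_zero {x : A} (hx : x ≠ 0) : e.symm x (ordOf e x) ≠ 0 := by
  have hne : (e.symm x).support.Nonempty := Finsupp.support_nonempty_iff.mpr fun h =>
    hx (by rw [← e.apply_symm_apply x, h, apply_zero he])
  obtain ⟨t, ht, hsup⟩ := Finset.exists_mem_eq_sup _ hne id
  rw [ordOf, hsup]
  exact Finsupp.mem_support_iff.mp ht

theorem eq_sum_of_ordOf_le {x : A} {m : ℕ} (hx : ordOf e x ≤ m) :
    x = ∑ j : Fin (m + 1), ι (e.symm x j) * D ^ (j : ℕ) := by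
  conv_lhs => rw [← e.apply_symm_apply x, he]
  rw [Fin.sum_univ_eq_sum_range (fun j => ι (e.symm x j) * D ^ j)]
  refine Finsupp.sum_of_support_subset _ (fun t ht => ?_) _ (fun _ _ => by simp)
  exact Finset.mem_range_succ_iff.mpr
    (le_trans (le_ordOf_of_symm_apply_ne_zero (Finsupp.mem_support_iff.mp ht)) hx)

theorem symm_mul_apply (x y : A) (t : ℕ) :
    e.symm (x * y) t =
      ∑ j : Fin (ordOf e x + 1), e.symm x j * e.symm (D ^ (j : ℕ) * y) t := by
  conv_lhs => rw [eq_sum_of_ordOf_le he le_rfl (x := x), Finset.sum_mul]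
  rw [symm_sum he, Finsupp.finsetSum_apply]
  exact Finset.sum_congr rfl fun j _ => by rw [mul_assoc, symm_iota_mul_apply he]

theorem symm_sum_iota_mul_pow {m : ℕ} (g : Fin (m + 1) → K) :
    e.symm (∑ i : Fin (m + 1), ι (g i) * D ^ (i : ℕ)) =
      ∑ i : Fin (m + 1), Finsupp.single (i : ℕ) (g i) := by
  rw [Equiv.symm_apply_eq, apply_sum he]
  exact Finset.sum_congr rfl fun i _ => (apply_single he _ _).symm

theorem symm_sum_iota_mul_pow_apply {m : ℕ} (g : Fin (m + 1) → K) (j : Fin (m + 1)) :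
    e.symm (∑ i : Fin (m + 1), ι (g i) * D ^ (i : ℕ)) (j : ℕ) = g j := by
  rw [symm_sum_iota_mul_pow he, Finsupp.finsetSum_apply, Finset.sum_eq_single j]
  · exact Finsupp.single_eq_same
  · exact fun i _ hij => Finsupp.single_eq_of_ne' (Fin.val_injective.ne hij)
  · simp

theorem ordOf_sum_iota_mul_pow_le {m : ℕ} (g : Fin (m + 1) → K) :
    ordOf e (∑ i : Fin (m + 1), ι (g i) * D ^ (i : ℕ)) ≤ m := by
  refine ordOf_le_iff.mpr fun t ht => ?_
  rw [symm_sum_iota_mul_pow he, Finsupp.finsetSum_apply]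
  exact Finset.sum_eq_zero fun i _ => Finsupp.single_eq_of_ne' (by have := i.isLt; omega)

end Coordinates

section Commutation

variable {K A : Type*} [Semiring K] [Semiring A] {δ : K →+ K} {ι : K →+* A} {D : A}
  {e : (ℕ →₀ K) ≃ A} (he : ∀ f : ℕ →₀ K, e f = f.sum fun i a => ι a * D ^ i)
  (hcomm : ∀ a : K, D * ι a = ι a * D + ι (δ a))
include he hcomm

theorem D_mul_apply (f : ℕ →₀ K) :
    D * e f = e (f.mapDomain (· + 1)) + e (f.mapRange δ δ.map_zero) := by
  induction f using Finsupp.induction with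
  | zero => simp only [Finsupp.mapDomain_zero, Finsupp.mapRange_zero, he, Finsupp.sum_zero_index,
      mul_zero, add_zero]
  | single_add i a f _ _ ih =>
    rw [Finsupp.mapDomain_add, Finsupp.mapRange_add (map_add δ), Finsupp.mapDomain_single,
      Finsupp.mapRange_single, apply_add he, apply_add he, apply_add he, mul_add, ih,
      apply_single he, apply_single he, apply_single he, ← mul_assoc, hcomm, add_mul, mul_assoc,
      ← pow_succ']
    abel

theorem symm_D_mul_apply_succ (x : A) (t : ℕ) :
    e.symm (D * x) (t + 1) = e.symm x t + δ (e.symm x (t + 1)) := by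
  conv_lhs => rw [← e.apply_symm_apply x]
  rw [D_mul_apply he hcomm, symm_add he, e.symm_apply_apply, e.symm_apply_apply,
    Finsupp.add_apply, Finsupp.mapRange_apply, Finsupp.mapDomain_apply (add_left_injective 1)]

theorem ordOf_D_pow_mul_le (i : ℕ) (y : A) : ordOf e (D ^ i * y) ≤ ordOf e y + i := by
  induction i with
  | zero => simp
  | succ i ih =>
    refine ordOf_le_iff.mpr fun t ht => ?_
    obtain ⟨s, rfl⟩ : ∃ s, t = s + 1 := Nat.exists_eq_add_one.mpr (by omega)
    rw [pow_succ', mul_assoc, symm_D_mul_apply_succ he hcomm,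
      ordOf_le_iff.mp ih s (by omega), ordOf_le_iff.mp ih (s + 1) (by omega), map_zero, add_zero]

theorem symm_D_pow_mul_apply_top (i : ℕ) (y : A) :
    e.symm (D ^ i * y) (ordOf e y + i) = e.symm y (ordOf e y) := by
  induction i with
  | zero => simp
  | succ i ih =>
    rw [pow_succ', mul_assoc, ← add_assoc, symm_D_mul_apply_succ he hcomm, ih,
      ordOf_le_iff.mp (ordOf_D_pow_mul_le he hcomm i y) _ (by omega), map_zero, add_zero]

theorem ordOf_mul_le (x y : A) : ordOf e (x * y) ≤ ordOf e x + ordOf e y := by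
  refine ordOf_le_iff.mpr fun t ht => ?_
  rw [symm_mul_apply he]
  refine Finset.sum_eq_zero fun j _ => ?_
  rw [ordOf_le_iff.mp (ordOf_D_pow_mul_le he hcomm j y) t (by omega), mul_zero]

theorem symm_mul_apply_top (x y : A) :
    e.symm (x * y) (ordOf e x + ordOf e y) = e.symm x (ordOf e x) * e.symm y (ordOf e y) := by
  rw [symm_mul_apply he, Finset.sum_eq_single (Fin.last _), Fin.val_last, add_comm,
    symm_D_pow_mul_apply_top he hcomm]
  · intro j _ hj
    have := Fin.val_lt_last hj
    rw [ordOf_le_iff.mp (ordOf_D_pow_mul_le he hcomm j y) _ (by omega), mul_zero]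
  · simp

theorem symm_mul_apply_top_ne_zero [NoZeroDivisors K] {x y : A} (hx : x ≠ 0) (hy : y ≠ 0) :
    e.symm (x * y) (ordOf e x + ordOf e y) ≠ 0 := by
  rw [symm_mul_apply_top he hcomm]
  exact mul_ne_zero (symm_apply_ordOf_ne_zero he hx) (symm_apply_ordOf_ne_zero he hy)

theorem noZeroDivisors [NoZeroDivisors K] : NoZeroDivisors A where
  eq_zero_or_eq_zero_of_mul_eq_zero {x y} hxy := by
    by_contra! h
    simpa [hxy, symm_zero he] using symm_mul_apply_top_ne_zero he hcomm h.1 h.2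

theorem ordOf_mul [NoZeroDivisors K] {x y : A} (hx : x ≠ 0) (hy : y ≠ 0) :
    ordOf e (x * y) = ordOf e x + ordOf e y :=
  le_antisymm (ordOf_mul_le he hcomm x y)
    (le_ordOf_of_symm_apply_ne_zero (symm_mul_apply_top_ne_zero he hcomm hx hy))

end Commutation

section Division

variable {K A : Type*} [Field K] [Ring A] {δ : K →+ K} {ι : K →+* A} {D : A}
  {e : (ℕ →₀ K) ≃ A} (he : ∀ f : ℕ →₀ K, e f = f.sum fun i a => ι a * D ^ i)
  (hcomm : ∀ a : K, D * ι a = ι a * D + ι (δ a))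
include he hcomm

omit hcomm in
theorem symm_sub_iota_mul_apply (x z : A) (c : K) (t : ℕ) :
    e.symm (x - ι c * z) t = e.symm x t - c * e.symm z t := by
  rw [sub_eq_add_neg, symm_add he, ← neg_mul, ← map_neg, Finsupp.add_apply,
    symm_iota_mul_apply he, neg_mul, ← sub_eq_add_neg]

theorem exists_symm_sub_mul_apply_eq_zero {x y : A} (hy : y ≠ 0)
    (hxy : ordOf e y ≤ ordOf e x) :
    ∃ q, ∀ t, ordOf e x ≤ t → e.symm (x - q * y) t = 0 := by
  obtain ⟨m, hm⟩ := Nat.exists_eq_add_of_le hxy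
  refine ⟨ι (e.symm x (ordOf e x) * (e.symm y (ordOf e y))⁻¹) * D ^ m, fun t ht => ?_⟩
  rw [mul_assoc, symm_sub_iota_mul_apply he]
  rcases ht.eq_or_lt with rfl | ht
  · rw [hm, symm_D_pow_mul_apply_top he hcomm, ← hm, mul_assoc,
      inv_mul_cancel₀ (symm_apply_ordOf_ne_zero he hy), mul_one, sub_self]
  · rw [ordOf_le_iff.mp le_rfl t ht,
      ordOf_le_iff.mp (ordOf_D_pow_mul_le he hcomm m y) t (by omega), mul_zero, sub_zero]

theorem exists_eq_mul_add {y : A} (hy : y ≠ 0) (x : A) :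
    ∃ q r, x = q * y + r ∧ (r = 0 ∨ ordOf e r < ordOf e y) := by
  induction hN : ordOf e x using Nat.strong_induction_on generalizing x with
  | _ N ih =>
    by_cases hxy : ordOf e x < ordOf e y
    · exact ⟨0, x, by rw [zero_mul, zero_add], Or.inr hxy⟩
    obtain ⟨q, hq⟩ := exists_symm_sub_mul_apply_eq_zero he hcomm hy (not_lt.mp hxy)
    by_cases h0 : x - q * y = 0
    · exact ⟨q, 0, by rw [add_zero, ← sub_eq_zero, h0], Or.inl rfl⟩
    have hlt : ordOf e (x - q * y) < N := by
      by_contra! hle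
      exact symm_apply_ordOf_ne_zero he h0 (hq _ (hN ▸ hle))
    obtain ⟨q', r, hx', hr⟩ := ih _ hlt (x - q * y) rfl
    exact ⟨q + q', r, by rw [add_mul, add_assoc, ← hx', add_sub_cancel], hr⟩

theorem IsLCLM.exists_eq_mul {k : ℕ} {L : Fin k → A} {M W : A} (hM : IsLCLM e L M)
    (hW : ∀ i, ∃ P, W = P * L i) : ∃ R, W = R * M := by
  obtain ⟨R, r, hdiv, hr⟩ := exists_eq_mul_add he hcomm hM.1.1 W
  refine ⟨R, ?_⟩
  by_contra hne
  have hr0 : r ≠ 0 := fun h => hne (by rw [hdiv, h, add_zero])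
  have hclm : IsCLM L r := ⟨hr0, fun i => by
    obtain ⟨P, hP⟩ := hW i
    obtain ⟨Q, hQ⟩ := hM.1.2 i
    exact ⟨P - R * Q, by rw [sub_mul, mul_assoc, ← hQ, ← hP, hdiv, add_sub_cancel_left]⟩⟩
  exact (hr.resolve_left hr0).not_ge (hM.2 r hclm)

end Division

section Phi

variable {K A : Type*}

theorem symm_phiInv_apply [AddCommMonoid K] (e : (ℕ →₀ K) ≃ A) (m : ℕ) (v : Fin (m + 1) → K)
    (t : ℕ) : e.symm (phiInv e m v) t = if h : t ≤ m then v ⟨m - t, by omega⟩ else 0 := by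
  rw [phiInv, e.symm_apply_apply, Finsupp.finsetSum_apply]
  split_ifs with h
  · rw [Finset.sum_eq_single ⟨m - t, by omega⟩, Finsupp.single_apply, if_pos (by simp; omega)]
    · intro b _ hb
      rw [Finsupp.single_apply, if_neg]
      exact fun hbt => hb (Fin.ext (by simp; omega))
    · simp
  · exact Finset.sum_eq_zero fun b _ => by rw [Finsupp.single_apply, if_neg (by omega)]

theorem phiV_phiInv [AddCommMonoid K] (e : (ℕ →₀ K) ≃ A) (m : ℕ) (v : Fin (m + 1) → K) :
    phiV e m (phiInv e m v) = v := by
  funext a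
  rw [phiV, symm_phiInv_apply, dif_pos (by omega)]
  exact congrArg v (Fin.ext (by simp; omega))

theorem ordOf_phiInv_le [AddCommMonoid K] (e : (ℕ →₀ K) ≃ A) (m : ℕ) (v : Fin (m + 1) → K) :
    ordOf e (phiInv e m v) ≤ m :=
  ordOf_le_iff.mpr fun t ht => by rw [symm_phiInv_apply, dif_neg (by omega)]

theorem phiInv_phiV [AddCommMonoid K] {e : (ℕ →₀ K) ≃ A} {m : ℕ} {x : A} (hx : ordOf e x ≤ m) :
    phiInv e m (phiV e m x) = x := by
  rw [← e.symm.injective.eq_iff]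
  ext t
  rw [symm_phiInv_apply]
  split_ifs with h
  · rw [phiV, Fin.val_mk, Nat.sub_sub_self h]
  · exact (ordOf_le_iff.mp hx t (by omega)).symm

variable [Semiring K] [Semiring A] {ι : K →+* A} {D : A} {e : (ℕ →₀ K) ≃ A}
  (he : ∀ f : ℕ →₀ K, e f = f.sum fun i a => ι a * D ^ i)
include he

theorem phiInv_eq_sum (m : ℕ) (v : Fin (m + 1) → K) :
    phiInv e m v = ∑ a : Fin (m + 1), ι (v a) * D ^ (m - (a : ℕ)) := by
  rw [phiInv, apply_sum he]
  exact Finset.sum_congr rfl fun a _ => apply_single he _ _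

theorem phiV_sum_iota_mul {σ : Type*} (N : ℕ) (s : Finset σ) (g : σ → K) (X : σ → A) :
    phiV e N (∑ j ∈ s, ι (g j) * X j) = ∑ j ∈ s, g j • phiV e N (X j) := by
  funext a
  simp only [phiV, symm_sum he, Finsupp.finsetSum_apply, symm_iota_mul_apply he,
    Finset.sum_apply, Pi.smul_apply, smul_eq_mul]

end Phi

section Kernel

variable {K A : Type*} [Field K] [Ring A] {ι : K →+* A} {D : A} {e : (ℕ →₀ K) ≃ A}
  (he : ∀ f : ℕ →₀ K, e f = f.sum fun i a => ι a * D ^ i)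
  {k : ℕ} (L : Fin k → A) (r : Fin k → ℕ) (n : ℕ)
include he

theorem vecMul_Mmat_apply (u : (Σ i : Fin k, Fin (n - r i + 1)) ⊕ Fin (n + 1) → K)
    (i : Fin k) (c : Fin (n + 1)) :
    Matrix.vecMul u (Mmat e D L r n) (i, c) =
      phiV e n (phiInv e (n - r i) (fun a => u (.inl ⟨i, a⟩)) * L i) c - u (.inr c) := by
  have hblock : phiV e n (phiInv e (n - r i) (fun a => u (.inl ⟨i, a⟩)) * L i) c =
      ∑ a, u (.inl ⟨i, a⟩) * Syl e D n (r i) (L i) a c := by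
    simp only [phiInv_eq_sum he, Finset.sum_mul, mul_assoc, phiV_sum_iota_mul he]
    simp [Syl, Finset.sum_apply]
  rw [hblock]
  simp [Matrix.vecMul, dotProduct, Mmat, Fintype.sum_sum_type, Fintype.sum_sigma, Fin.val_inj,
    sub_eq_add_neg]

theorem mem_ker_Mmat_iff (u : (Σ i : Fin k, Fin (n - r i + 1)) ⊕ Fin (n + 1) → K) :
    u ∈ LinearMap.ker (Mmat e D L r n).vecMulLinear ↔
      ∀ i, phiV e n (phiInv e (n - r i) (fun a => u (.inl ⟨i, a⟩)) * L i) =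
        fun a => u (.inr a) := by
  simp only [LinearMap.mem_ker, Matrix.vecMulLinear_apply, funext_iff, Prod.forall,
    vecMul_Mmat_apply he, Pi.zero_apply, sub_eq_zero]

end Kernel

section Basis

variable {K A : Type*}

/-- The paper's vector `v_j` is `leftKernelVec e Q M r n (D ^ j)`. -/
def leftKernelVec [Zero K] [Mul A] (e : (ℕ →₀ K) ≃ A) {k : ℕ} (Q : Fin k → A) (M : A)
    (r : Fin k → ℕ) (n : ℕ) (R : A) : (Σ i : Fin k, Fin (n - r i + 1)) ⊕ Fin (n + 1) → K :=
  Sum.elim (fun p => phiV e (n - r p.1) (R * Q p.1) p.2) (phiV e n (R * M))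

variable [Field K] [Ring A] {δ : K →+ K} {ι : K →+* A} {D : A} {e : (ℕ →₀ K) ≃ A}
  (he : ∀ f : ℕ →₀ K, e f = f.sum fun i a => ι a * D ^ i)
  (hcomm : ∀ a : K, D * ι a = ι a * D + ι (δ a))
  {k : ℕ} {L Q : Fin k → A} {M : A} {r : Fin k → ℕ} {n : ℕ}
include he

theorem leftKernelVec_mem_ker (hQ : ∀ i, M = Q i * L i) {R : A}
    (hR : ∀ i, ordOf e (R * Q i) ≤ n - r i) :
    leftKernelVec e Q M r n R ∈ LinearMap.ker (Mmat e D L r n).vecMulLinear := by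
  refine (mem_ker_Mmat_iff he L r n _).mpr fun i => ?_
  simp only [leftKernelVec, Sum.elim_inl, Sum.elim_inr]
  rw [phiInv_phiV (hR i), mul_assoc, ← hQ i]

theorem sum_smul_leftKernelVec {σ : Type*} (s : Finset σ) (g : σ → K) (X : σ → A) :
    ∑ j ∈ s, g j • leftKernelVec e Q M r n (X j) =
      leftKernelVec e Q M r n (∑ j ∈ s, ι (g j) * X j) := by
  ext (⟨i, a⟩ | a) <;>
    simp [leftKernelVec, Finset.sum_mul, mul_assoc, phiV_sum_iota_mul he, Finset.sum_apply]

include hcomm in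
theorem linearIndependent_leftKernelVec (hM : M ≠ 0) (hn : ordOf e M ≤ n) :
    LinearIndependent K
      fun j : Fin (n - ordOf e M + 1) => leftKernelVec e Q M r n (D ^ (j : ℕ)) := by
  have := noZeroDivisors he hcomm
  refine Fintype.linearIndependent_iff.mpr fun g hg j => ?_
  rw [sum_smul_leftKernelVec he] at hg
  have hRord := ordOf_sum_iota_mul_pow_le he g
  have hcoeff := symm_sum_iota_mul_pow_apply he g j
  set R := ∑ j : Fin (n - ordOf e M + 1), ι (g j) * D ^ (j : ℕ)
  have hRM : R * M = 0 := by
    have hphi : phiV e n (R * M) = 0 := funext fun a => congrFun hg (.inr a)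
    have hord : ordOf e (R * M) ≤ n := by
      have := ordOf_mul_le he hcomm R M
      omega
    rw [← phiInv_phiV hord, hphi]
    simp [phiInv, apply_zero he]
  rw [← hcoeff, (mul_eq_zero.mp hRM).resolve_right hM, symm_zero he,
    Finsupp.zero_apply]

include hcomm in
theorem exists_sum_smul_leftKernelVec_eq (hM : IsLCLM e L M) (hQ : ∀ i, M = Q i * L i)
    (hL : ∀ i, L i ≠ 0) (hr : ∀ i, ordOf e (L i) ≤ r i) (hrn : ∀ i, r i ≤ n)
    {u : (Σ i : Fin k, Fin (n - r i + 1)) ⊕ Fin (n + 1) → K}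
    (hu : u ∈ LinearMap.ker (Mmat e D L r n).vecMulLinear) :
    ∃ g : Fin (n - ordOf e M + 1) → K,
      ∑ j, g j • leftKernelVec e Q M r n (D ^ (j : ℕ)) = u := by
  have := noZeroDivisors he hcomm
  set P := fun i => phiInv e (n - r i) (fun a => u (.inl ⟨i, a⟩))
  set W := phiInv e n (fun a => u (.inr a))
  have hPW : ∀ i, P i * L i = W := fun i => by
    have hord : ordOf e (P i * L i) ≤ n := by
      have := ordOf_mul_le he hcomm (P i) (L i)
      have : ordOf e (P i) ≤ n - r i := ordOf_phiInv_le e _ _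
      have := hr i
      have := hrn i
      omega
    rw [← phiInv_phiV hord, (mem_ker_Mmat_iff he L r n u).mp hu i]
  obtain ⟨R, hR⟩ := hM.exists_eq_mul he hcomm fun i => ⟨P i, (hPW i).symm⟩
  have hRQ : ∀ i, P i = R * Q i := fun i =>
    mul_right_cancel₀ (hL i) (by rw [hPW, hR, mul_assoc, ← hQ])
  have hRord : ordOf e R ≤ n - ordOf e M := by
    rcases eq_or_ne R 0 with rfl | hR0
    · exact ordOf_le_iff.mpr fun t _ => by rw [symm_zero he, Finsupp.zero_apply]
    · have h1 : ordOf e W = ordOf e R + ordOf e M := hR ▸ ordOf_mul he hcomm hR0 hM.1.1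
      have h2 : ordOf e W ≤ n := ordOf_phiInv_le e n _
      omega
  refine ⟨fun j => e.symm R j, ?_⟩
  rw [sum_smul_leftKernelVec he, ← eq_sum_of_ordOf_le he hRord]
  ext (⟨i, a⟩ | a)
  · simp [leftKernelVec, ← hRQ, P, phiV_phiInv]
  · simp [leftKernelVec, ← hR, W, phiV_phiInv]

include hcomm in
theorem span_leftKernelVec_eq_ker (hM : IsLCLM e L M) (hQ : ∀ i, M = Q i * L i)
    (hL : ∀ i, L i ≠ 0) (hr : ∀ i, ordOf e (L i) = r i) (hn : ordOf e M ≤ n) :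
    Submodule.span K
        (Set.range fun j : Fin (n - ordOf e M + 1) => leftKernelVec e Q M r n (D ^ (j : ℕ))) =
      LinearMap.ker (Mmat e D L r n).vecMulLinear := by
  have hordQ : ∀ i, ordOf e (Q i) + r i = ordOf e M := fun i => by
    have hQ0 : Q i ≠ 0 := fun h => hM.1.1 (by rw [hQ i, h, zero_mul])
    rw [← hr i, ← ordOf_mul he hcomm hQ0 (hL i), ← hQ i]
  refine le_antisymm (Submodule.span_le.mpr ?_) fun u hu => ?_
  · rintro _ ⟨j, rfl⟩
    refine leftKernelVec_mem_ker he hQ fun i => ?_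
    have := ordOf_D_pow_mul_le he hcomm j (Q i)
    have := hordQ i
    have := j.isLt
    omega
  · obtain ⟨g, hg⟩ := exists_sum_smul_leftKernelVec_eq he hcomm hM hQ hL (fun i => (hr i).le)
      (fun i => by have := hordQ i; omega) hu
    exact (Submodule.mem_span_range_iff_exists_fun K).mpr ⟨g, hg⟩

end Basis

theorem left_kernel_basis_general [Field K] [Ring A]
    (δ : K →+ K)
    (ι : K →+* A) (D : A)
    (hcomm : ∀ a : K, D * ι a = ι a * D + ι (δ a))
    (e : (ℕ →₀ K) ≃ A)
    (he : ∀ f : ℕ →₀ K, e f = f.sum fun i a => ι a * D ^ i)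
    {k : ℕ} (L : Fin k → A) (hL : ∀ i, L i ≠ 0)
    (r : Fin k → ℕ) (hr : ∀ i, ordOf e (L i) = r i)
    (Lc : A) (hLc : IsLCLM e L Lc)
    (ℓ : ℕ) (hℓ : ordOf e Lc = ℓ)
    (Q : Fin k → A) (hQ : ∀ i, Lc = Q i * L i)
    (n : ℕ) (hn : ℓ ≤ n) :
    ∃ b : Module.Basis (Fin (n - ℓ + 1)) K (LinearMap.ker (Mmat e D L r n).vecMulLinear),
      ∀ j : Fin (n - ℓ + 1),
        (b j : ((Σ i : Fin k, Fin (n - r i + 1)) ⊕ Fin (n + 1)) → K) =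
          Sum.elim
            (fun p : Σ i : Fin k, Fin (n - r i + 1) =>
              phiV e (n - r p.1) (D ^ (j : ℕ) * Q p.1) p.2)
            (fun a : Fin (n + 1) => phiV e n (D ^ (j : ℕ) * Lc) a) := by
  subst hℓ
  refine ⟨(Module.Basis.span (linearIndependent_leftKernelVec he hcomm hLc.1.1 hn)).map
    (LinearEquiv.ofEq _ _ (span_leftKernelVec_eq_ker he hcomm hLc hQ hL hr hn)), fun j => ?_⟩
  rw [Module.Basis.map_apply, Module.Basis.span_apply]
  rfl

/-- the left kernel of `M_n` has dimension `n − ℓ + 1`, with basis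
the vectors `v_j = (φ_{n-r₁}(∂^j Q₁), ..., φ_{n-r_k}(∂^j Q_k), φ_n(∂^j L))`,
`0 ≤ j ≤ n − ℓ`, where `L = lclm(L₁,...,L_k)` has order `ℓ` and `L = Qᵢ Lᵢ`. -/
theorem left_kernel_basis [Field K] [Ring A]
    (δ : K →+ K) (hLeib : ∀ a b : K, δ (a * b) = a * δ b + δ a * b)
    (ι : K →+* A) (D : A)
    (hcomm : ∀ a : K, D * ι a = ι a * D + ι (δ a))
    (e : (ℕ →₀ K) ≃ A)
    (he : ∀ f : ℕ →₀ K, e f = f.sum fun i a => ι a * D ^ i)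
    {k : ℕ} (L : Fin k → A) (hL : ∀ i, L i ≠ 0)
    (r : Fin k → ℕ) (hr : ∀ i, ordOf e (L i) = r i)
    (Lc : A) (hLc : IsLCLM e L Lc)
    (ℓ : ℕ) (hℓ : ordOf e Lc = ℓ)
    (Q : Fin k → A) (hQ : ∀ i, Lc = Q i * L i)
    (n : ℕ) (hn : ℓ ≤ n) :
    ∃ b : Module.Basis (Fin (n - ℓ + 1)) K (LinearMap.ker (Mmat e D L r n).vecMulLinear),
      ∀ j : Fin (n - ℓ + 1),
        (b j : ((Σ i : Fin k, Fin (n - r i + 1)) ⊕ Fin (n + 1)) → K) =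
          Sum.elim
            (fun p : Σ i : Fin k, Fin (n - r i + 1) =>
              phiV e (n - r p.1) (D ^ (j : ℕ) * Q p.1) p.2)
            (fun a : Fin (n + 1) => phiV e n (D ^ (j : ℕ) * Lc) a) :=
  left_kernel_basis_general δ ι D hcomm e he L hL r hr Lc hLc ℓ hℓ Q hQ n hn
end

section
/- Let P be a nonzero operator of order m in K[∂;δ] and n ≥ m. Then for every Q ∈ K[∂;δ] of order at most n − m, we have φ_n(QP) = φ_{n−m}(Q) · S_n(P), where S_n(P) is the matrix whose rows are φ_n(∂^{n−m}P), φ_n(∂^{n−m−1}P), ..., φ_n(P). -/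
/-- `φ_n(QP) = φ_{n−m}(Q) · S_n(P)` for `P ≠ 0` of order `m ≤ n`
and `Q` of order at most `n − m`. -/
theorem phi_mul_eq_vecMul_Syl [Field K] [Ring A]
    (δ : K →+ K) (hLeib : ∀ a b : K, δ (a * b) = a * δ b + δ a * b)
    (ι : K →+* A) (D : A)
    (hcomm : ∀ a : K, D * ι a = ι a * D + ι (δ a))
    (e : (ℕ →₀ K) ≃ A)
    (he : ∀ f : ℕ →₀ K, e f = f.sum fun i a => ι a * D ^ i)
    (P : A) (hP : P ≠ 0) (m : ℕ) (hm : ordOf e P = m)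
    (n : ℕ) (hn : m ≤ n)
    (Q : A) (hQ : ordOf e Q ≤ n - m) :
    phiV e n (Q * P) = Matrix.vecMul (phiV e (n - m) Q) (Syl e D n m P) := by
  classical
  have hadd : ∀ f g : ℕ →₀ K, e (f + g) = e f + e g := by
    intro f g
    rw [he, he, he]
    exact Finsupp.sum_add_index' (fun i => by simp) (fun i b c => by rw [map_add, add_mul])
  set E : (ℕ →₀ K) ≃+ A := AddEquiv.mk' e hadd with hE
  have hEs : ∀ x : A, E.symm x = e.symm x := fun x => rfl
  have hsmul : ∀ (a : K) (x : A), e.symm (ι a * x) = a • e.symm x := by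
    intro a x
    rw [Equiv.symm_apply_eq, he, Finsupp.sum_smul_index (fun i => by simp)]
    simp only [smul_eq_mul, map_mul, mul_assoc, ← Finsupp.mul_sum]
    rw [← he, e.apply_symm_apply]
  have hsupp : (e.symm Q).support ⊆ Finset.range (n - m + 1) := by
    intro t ht
    simp only [Finset.mem_range, Nat.lt_succ_iff]
    exact le_trans (Finset.le_sup (f := id) ht) hQ
  have hQP : Q * P = ∑ i : Fin (n - m + 1), ι (e.symm Q (n - m - (i : ℕ))) * (D ^ (n - m - (i : ℕ)) * P) := by
    conv_lhs => rw [← e.apply_symm_apply Q, he]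
    rw [Finsupp.sum, Finset.sum_subset hsupp (fun t _ h => by
      simp [Finsupp.notMem_support_iff.mp h]), Finset.sum_mul]
    have hrefl := Finset.sum_range_reflect
      (fun t => ι (e.symm Q t) * (D ^ t * P)) (n - m + 1)
    simp only [Nat.add_sub_cancel] at hrefl
    rw [Fin.sum_univ_eq_sum_range (fun i => ι (e.symm Q (n - m - i)) * (D ^ (n - m - i) * P)),
      hrefl]
    exact Finset.sum_congr rfl fun t _ => by rw [mul_assoc]
  funext j
  have hsym : e.symm (Q * P) =
      ∑ i : Fin (n - m + 1), (e.symm Q (n - m - (i : ℕ))) • e.symm (D ^ (n - m - (i : ℕ)) * P) := by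
    rw [hQP, ← hEs, map_sum]
    exact Finset.sum_congr rfl fun i _ => by rw [hEs, hsmul]
  simp only [phiV, Matrix.vecMul, dotProduct, Syl, Matrix.of_apply, hsym,
    Finsupp.finset_sum_apply, Finsupp.smul_apply, smul_eq_mul]
end
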